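/- arXiv:2602.02398 — 5 statements merged into one kernel-verified Lean document; each statement's English description precedes it below -/
import Mathlib

section
/- Define η(y, θ) for y ∈ ℤ≥0 and θ ∈ ℝ by η(0, θ) = 1 − σ(c + θ) and η(y, θ) = σ(c + θ) e^{−λ(d+θ)} λ(d+θ)^{y−1} / (y−1)! for y ≥ 1, where σ(x) = (1 + e^{−x})^{−1} is the logistic function and λ : ℝ → ℝ_{>0} is differentiable and nondecreasing with 0 ≤ λ'(d+θ) ≤ 1 for all θ. Then for every y ∈ ℤ≥0, the ratio θ ↦ η(y+1, θ)/η(y, θ) is nondecreasing in θ; consequently η is TP₂ in (y, θ). -/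
open Real

noncomputable def logistic (x : ℝ) : ℝ := (1 + Real.exp (-x))⁻¹

theorem logistic_eq_sigmoid : logistic = sigmoid := rfl

theorem sigmoid_div_one_sub_sigmoid (x : ℝ) : sigmoid x / (1 - sigmoid x) = exp x := by
  rw [← sigmoid_neg, ← sigmoid_mul_rexp_neg, div_mul_cancel_left₀ (sigmoid_pos x).ne',
    exp_neg, inv_inv]

theorem monotone_id_sub_of_deriv_le_one {f : ℝ → ℝ} (hf : Differentiable ℝ f)
    (hf' : ∀ x, deriv f x ≤ 1) : Monotone fun x => x - f x := by
  refine monotone_of_deriv_nonneg (differentiable_id.sub hf) fun x => ?_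
  rw [((hasDerivAt_id' x).fun_sub (hf x).hasDerivAt).deriv, sub_nonneg]
  exact hf' x

def IsTP2 {ι α : Type*} [Preorder ι] [Preorder α] (f : ι → α → ℝ) : Prop :=
  ∀ (m n : ι) (a b : α), m ≤ n → a ≤ b → f m b * f n a ≤ f m a * f n b

/-- The ratio of rows `m ≤ n` telescopes into ratios of consecutive rows. -/
theorem IsTP2.of_monotone_div_succ {α : Type*} [Preorder α] {f : ℕ → α → ℝ}
    (hf : ∀ n a, 0 < f n a) (h : ∀ n, Monotone fun a => f (n + 1) a / f n a) : IsTP2 f := by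
  intro m n a b hmn hab
  have hcol : Monotone fun n => f n b / f n a := monotone_nat_of_le_succ fun n => by
    have := (div_le_div_iff₀ (hf n a) (hf n b)).mp (h n hab)
    rw [div_le_div_iff₀ (hf n a) (hf (n + 1) a)]
    linarith
  have := (div_le_div_iff₀ (hf m a) (hf n a)).mp (hcol hmn)
  linarith

section HurdleKernel

variable {c d : ℝ} {lam : ℝ → ℝ} {η : ℕ → ℝ → ℝ}

theorem hurdle_pos (hpos : ∀ x, 0 < lam x) (hη0 : ∀ θ : ℝ, η 0 θ = 1 - logistic (c + θ))
    (hη1 : ∀ (y : ℕ) (θ : ℝ), η (y + 1) θ =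
      logistic (c + θ) * Real.exp (-(lam (d + θ))) * (lam (d + θ)) ^ y / (Nat.factorial y))
    (y : ℕ) (θ : ℝ) : 0 < η y θ := by
  rcases y with _ | y
  · rw [hη0, logistic_eq_sigmoid, sub_pos]
    exact sigmoid_lt_one _
  · have := hpos (d + θ)
    rw [hη1, logistic_eq_sigmoid]
    have := sigmoid_pos (c + θ)
    positivity

theorem hurdle_div_zero (hη0 : ∀ θ : ℝ, η 0 θ = 1 - logistic (c + θ))
    (hη1 : ∀ (y : ℕ) (θ : ℝ), η (y + 1) θ =
      logistic (c + θ) * Real.exp (-(lam (d + θ))) * (lam (d + θ)) ^ y / (Nat.factorial y))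
    (θ : ℝ) : η 1 θ / η 0 θ = exp (c + θ - lam (d + θ)) := by
  rw [hη1, hη0, logistic_eq_sigmoid, pow_zero, Nat.factorial_zero, Nat.cast_one, mul_one,
    div_one, mul_div_right_comm, sigmoid_div_one_sub_sigmoid, ← exp_add, sub_eq_add_neg]

theorem hurdle_div_succ (hpos : ∀ x, 0 < lam x)
    (hη1 : ∀ (y : ℕ) (θ : ℝ), η (y + 1) θ =
      logistic (c + θ) * Real.exp (-(lam (d + θ))) * (lam (d + θ)) ^ y / (Nat.factorial y))
    (y : ℕ) (θ : ℝ) : η (y + 2) θ / η (y + 1) θ = lam (d + θ) / (y + 1) := by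
  have := hpos (d + θ)
  have := sigmoid_pos (c + θ)
  rw [hη1, hη1, logistic_eq_sigmoid, Nat.factorial_succ]
  push_cast
  field_simp
  ring

end HurdleKernel

/-- Poisson–hurdle single-period kernel: if `0 ≤ λ'(d+θ) ≤ 1` for all `θ`, then
for every `y` the ratio `θ ↦ η(y+1,θ)/η(y,θ)` is nondecreasing in `θ`;
consequently `η` is TP₂ in `(y, θ)`. -/
theorem hurdle_kernel_TP2
    (c d : ℝ) (lam : ℝ → ℝ) (hpos : ∀ x, 0 < lam x)
    (hdiff : Differentiable ℝ lam)
    (hd0 : ∀ θ : ℝ, 0 ≤ deriv lam (d + θ))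
    (hd1 : ∀ θ : ℝ, deriv lam (d + θ) ≤ 1)
    (η : ℕ → ℝ → ℝ)
    (hη0 : ∀ θ : ℝ, η 0 θ = 1 - logistic (c + θ))
    (hη1 : ∀ (y : ℕ) (θ : ℝ), η (y + 1) θ =
      logistic (c + θ) * Real.exp (-(lam (d + θ))) * (lam (d + θ)) ^ y
        / (Nat.factorial y)) :
    (∀ y : ℕ, Monotone (fun θ : ℝ => η (y + 1) θ / η y θ)) ∧
    (∀ (y y' : ℕ) (θ θ' : ℝ), y ≤ y' → θ ≤ θ' →
      η y θ * η y' θ' ≥ η y θ' * η y' θ) := by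
  have lam_mono : Monotone lam :=
    monotone_of_deriv_nonneg hdiff fun x => by simpa using hd0 (x - d)
  have id_sub_lam_mono : Monotone fun x => x - lam x :=
    monotone_id_sub_of_deriv_le_one hdiff fun x => by simpa using hd1 (x - d)
  have hmono : ∀ y : ℕ, Monotone (fun θ : ℝ => η (y + 1) θ / η y θ) := by
    rintro (_ | y) θ θ' hθ
    · have := id_sub_lam_mono (add_le_add_right hθ d)
      simp only [zero_add, hurdle_div_zero hη0 hη1]
      exact exp_le_exp.mpr (by linarith)
    · simp only [hurdle_div_succ hpos hη1]
      gcongr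
      exact lam_mono (add_le_add_right hθ d)
  exact ⟨hmono, IsTP2.of_monotone_div_succ (hurdle_pos hpos hη0 hη1) hmono⟩
end

section
/- With η as in the Poisson–hurdle single-period kernel η(0, θ) = 1 − σ(c+θ), η(y, θ) = σ(c+θ) e^{−λ(d+θ)} λ(d+θ)^{y−1}/(y−1)! for y ≥ 1, with λ differentiable, the map θ ↦ η(y+1, θ)/η(y, θ) is nondecreasing in θ for every y ∈ ℤ≥0 if and only if 0 ≤ λ'(d+θ) ≤ 1 for all θ ∈ ℝ. -/
/-!
For `y ≥ 1` the Poisson factors cancel and `η(y+1, θ)/η(y, θ) = λ(d+θ)/y`, whereas for `y = 0` the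
logistic odds `σ/(1-σ) = e^{c+θ}` give `η(1, θ)/η(0, θ) = exp(c + θ - λ(d+θ))`. So monotonicity of
all the ratios amounts to monotonicity of `θ ↦ λ(d+θ)` and of `θ ↦ θ - λ(d+θ)`, that is,
to `0 ≤ λ' ≤ 1`.
-/

open Real

lemma logistic_pos (x : ℝ) : 0 < logistic x := by
  unfold logistic
  positivity

lemma logistic_div_one_sub_logistic (x : ℝ) : logistic x / (1 - logistic x) = exp x := by
  have hx : 0 < exp (-x) := exp_pos _
  rw [logistic, exp_neg] at *
  field_simp
  ring

lemma logistic_mul_exp_neg_div_one_sub_logistic (x l : ℝ) :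
    logistic x * exp (-l) / (1 - logistic x) = exp (x - l) := by
  rw [mul_div_right_comm, logistic_div_one_sub_logistic, ← exp_add, ← sub_eq_add_neg]

lemma poisson_term_succ_div {a l : ℝ} (ha : a ≠ 0) (hl : l ≠ 0) (y : ℕ) :
    a * l ^ (y + 1) / (Nat.factorial (y + 1)) / (a * l ^ y / (Nat.factorial y)) = l / (y + 1) := by
  rw [Nat.factorial_succ]
  push_cast
  field_simp
  ring

lemma monotone_exp_comp_iff {α : Type*} [Preorder α] {f : α → ℝ} :
    Monotone (fun x => exp (f x)) ↔ Monotone f :=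
  forall₂_congr fun _ _ => imp_congr_right fun _ => exp_le_exp

lemma monotone_div_const_iff {α : Type*} [Preorder α] {f : α → ℝ} {r : ℝ} (hr : 0 < r) :
    Monotone (fun x => f x / r) ↔ Monotone f :=
  forall₂_congr fun _ _ => imp_congr_right fun _ => div_le_div_iff_of_pos_right hr

lemma monotone_iff_forall_deriv_nonneg {f : ℝ → ℝ} (hf : Differentiable ℝ f) :
    Monotone f ↔ ∀ x, 0 ≤ deriv f x :=
  ⟨fun h _ => h.deriv_nonneg, monotone_of_deriv_nonneg hf⟩

lemma monotone_const_add_sub_iff {g : ℝ → ℝ} (hg : Differentiable ℝ g) (c : ℝ) :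
    Monotone (fun x => c + x - g x) ↔ ∀ x, deriv g x ≤ 1 := by
  have hderiv (x : ℝ) : HasDerivAt (fun x => c + x - g x) (1 - deriv g x) x :=
    ((hasDerivAt_id x).const_add c).sub (hg x).hasDerivAt
  rw [monotone_iff_forall_deriv_nonneg fun x => (hderiv x).differentiableAt]
  simp only [(hderiv _).deriv, sub_nonneg]

/-- For the Poisson–hurdle single-period kernel `η`, the ratio
`θ ↦ η(y+1,θ)/η(y,θ)` is nondecreasing in `θ` for every `y`
if and only if `0 ≤ λ'(d+θ) ≤ 1` for all `θ ∈ ℝ`. -/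
theorem hurdle_kernel_ratio_monotone_iff
    (c d : ℝ) (lam : ℝ → ℝ) (hpos : ∀ x, 0 < lam x)
    (hdiff : Differentiable ℝ lam)
    (η : ℕ → ℝ → ℝ)
    (hη0 : ∀ θ : ℝ, η 0 θ = 1 - logistic (c + θ))
    (hη1 : ∀ (y : ℕ) (θ : ℝ), η (y + 1) θ =
      logistic (c + θ) * Real.exp (-(lam (d + θ))) * (lam (d + θ)) ^ y
        / (Nat.factorial y)) :
    (∀ y : ℕ, Monotone (fun θ : ℝ => η (y + 1) θ / η y θ)) ↔
    (∀ θ : ℝ, 0 ≤ deriv lam (d + θ) ∧ deriv lam (d + θ) ≤ 1) := by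
  set g : ℝ → ℝ := fun θ => lam (d + θ)
  have hg : Differentiable ℝ g := fun θ => (hdiff _).comp θ ((differentiableAt_id).const_add d)
  have hratio_zero : (fun θ => η 1 θ / η 0 θ) = fun θ => exp (c + θ - g θ) := by
    funext θ
    rw [hη1, hη0, pow_zero, Nat.factorial_zero, Nat.cast_one, mul_one, div_one,
      logistic_mul_exp_neg_div_one_sub_logistic]
  have hratio_succ (y : ℕ) : (fun θ => η (y + 2) θ / η (y + 1) θ) = fun θ => g θ / (y + 1) := by
    funext θ
    rw [hη1, hη1, poisson_term_succ_div (mul_pos (logistic_pos _) (exp_pos _)).ne' (hpos _).ne']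
  have hsplit : (∀ y : ℕ, Monotone (fun θ : ℝ => η (y + 1) θ / η y θ)) ↔
      Monotone (fun θ => c + θ - g θ) ∧ Monotone g := by
    refine ⟨fun h => ⟨?_, ?_⟩, fun ⟨h₀, h₁⟩ y => ?_⟩
    · simpa only [hratio_zero, monotone_exp_comp_iff] using h 0
    · simpa only [hratio_succ, Nat.cast_zero, zero_add, div_one] using h 1
    · rcases y with _ | y
      · simpa only [hratio_zero, monotone_exp_comp_iff] using h₀
      · rw [hratio_succ, monotone_div_const_iff (by positivity)]
        exact h₁
  rw [hsplit, monotone_const_add_sub_iff hg, monotone_iff_forall_deriv_nonneg hg, and_comm,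
    ← forall_and]
  simp only [g, deriv_comp_const_add]
end

section
/- In the Beta–Gamma Poisson–hurdle model with a = 0.5, b = 1, α = 1, β = 1, the general credibility order fails: E[(Y₂ − 3)^+ | Y₁ = 0] = 1/20 > 1/30 = E[(Y₂ − 3)^+ | Y₁ = 1]. -/
/-!
Because `(y - 3)⁺` vanishes at `y = 0`, given `Θ` the expected stop-loss is `Θ₁ g(Θ₂)`, where
`g(λ) = E(N - 2)⁺ = λ - 2 + (λ + 2) e^{-λ}` for `N ~ Pois(λ)`. The likelihood of `Y₁ ∈ {0, 1}`
is a product of a function of `Θ₁` and a function of `Θ₂`, so `Θ₁` and `Θ₂` stay independent a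
posteriori, and the conditional expectation is the posterior mean of `Θ₁` times that of `g(Θ₂)`.
These are `1/5` and `1/4` after `Y₁ = 0`, and `3/5` and `1/18` after `Y₁ = 1`: a claim raises
the claim probability, but the update `Gamma(1, 1) → Gamma(1, 2)` lowers the expected excess
by more.
-/

open Real MeasureTheory

/-- Density of the `Beta(a,b)` distribution on `(0,1)`. -/
noncomputable def betaDens (a b x : ℝ) : ℝ :=
  x ^ (a - 1) * (1 - x) ^ (b - 1) * Real.Gamma (a + b) /
    (Real.Gamma a * Real.Gamma b)

/-- Density of the `Gamma(α,β)` distribution on `(0,∞)`. -/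
noncomputable def gammaDens (α β x : ℝ) : ℝ :=
  β ^ α * x ^ (α - 1) * Real.exp (-(β * x)) / Real.Gamma α

/-- Conditional pmf of `Y = Z(1+N)` given `(Θ₁,Θ₂) = (p, lam)`, where
`Z ~ Ber(p)` and `N ~ Pois(lam)` independently. -/
noncomputable def hurdlePMF (p lam : ℝ) : ℕ → ℝ
  | 0 => 1 - p
  | n + 1 => p * Real.exp (-lam) * lam ^ n / (Nat.factorial n)

/-- Conditional expectation `E[h(Y₂) ∣ Y₁ = y₁]` in the Beta–Gamma
Poisson–hurdle mixture model with `Θ₁ ~ Beta(a,b)`, `Θ₂ ~ Gamma(α,β)`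
independent and `(Z_t, N_t)` conditionally iid given `Θ`. -/
noncomputable def condExpHurdle (a b α β : ℝ) (h : ℕ → ℝ) (y₁ : ℕ) : ℝ :=
  (∫ θ₁ in Set.Ioo (0:ℝ) 1, ∫ θ₂ in Set.Ioi (0:ℝ),
      (∑' y₂ : ℕ, h y₂ * hurdlePMF θ₁ θ₂ y₂) * hurdlePMF θ₁ θ₂ y₁ *
        betaDens a b θ₁ * gammaDens α β θ₂) /
  (∫ θ₁ in Set.Ioo (0:ℝ) 1, ∫ θ₂ in Set.Ioi (0:ℝ),
      hurdlePMF θ₁ θ₂ y₁ * betaDens a b θ₁ * gammaDens α β θ₂)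

open Set
open scoped Nat

lemma hasSum_pow_div_factorial (x : ℝ) : HasSum (fun n : ℕ => x ^ n / n !) (exp x) := by
  rw [exp_eq_exp_ℝ]
  exact NormedSpace.expSeries_div_hasSum_exp x

lemma hasSum_natCast_mul_pow_div_factorial (x : ℝ) :
    HasSum (fun n : ℕ => n * (x ^ n / n !)) (x * exp x) := by
  refine (hasSum_nat_add_iff' 1).mp ?_
  simp only [Finset.range_one, Finset.sum_singleton, CharP.cast_eq_zero, zero_mul, sub_zero]
  refine ((hasSum_pow_div_factorial x).mul_left x).congr_fun fun n => ?_
  rw [Nat.factorial_succ]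
  push_cast
  field_simp
  ring

lemma max_sub_zero_eq_sub_add_max_sub (a b : ℝ) : max (a - b) 0 = a - b + max (b - a) 0 := by
  rcases le_total a b with h | h
  · rw [max_eq_right (by linarith), max_eq_left (by linarith)]; ring
  · rw [max_eq_left (by linarith), max_eq_right (by linarith)]; ring

lemma hasSum_max_sub_mul_pow_div_factorial (d : ℕ) (x : ℝ) :
    HasSum (fun n : ℕ => max ((n : ℝ) - d) 0 * (x ^ n / n !))
      ((x - d) * exp x + ∑ k ∈ Finset.range d, (d - k : ℝ) * (x ^ k / k !)) := by
  have hlow : HasSum (fun n : ℕ => max ((d : ℝ) - n) 0 * (x ^ n / n !))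
      (∑ k ∈ Finset.range d, (d - k : ℝ) * (x ^ k / k !)) := by
    have hsum : ∑ k ∈ Finset.range d, max ((d : ℝ) - k) 0 * (x ^ k / k !)
        = ∑ k ∈ Finset.range d, (d - k : ℝ) * (x ^ k / k !) :=
      Finset.sum_congr rfl fun k hk => by
        rw [max_eq_left (sub_nonneg.mpr (by exact_mod_cast (Finset.mem_range.mp hk).le))]
    rw [← hsum]
    refine hasSum_sum_of_ne_finset_zero fun n hn => ?_
    rw [max_eq_right (sub_nonpos.mpr (by exact_mod_cast not_lt.mp (mt Finset.mem_range.mpr hn))),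
      zero_mul]
  rw [sub_mul]
  refine (((hasSum_natCast_mul_pow_div_factorial x).sub
    ((hasSum_pow_div_factorial x).mul_left (d : ℝ))).add hlow).congr_fun fun n => ?_
  rw [max_sub_zero_eq_sub_add_max_sub]
  ring

lemma hurdlePMF_one (p lam : ℝ) : hurdlePMF p lam 1 = p * exp (-lam) := by
  simp [hurdlePMF]

lemma tsum_mul_hurdlePMF {h : ℕ → ℝ} (h0 : h 0 = 0) (p lam : ℝ) :
    ∑' y, h y * hurdlePMF p lam y = p * ∑' y, h y * hurdlePMF 1 lam y := by
  rw [← tsum_mul_left]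
  congr 1
  funext y
  cases y with
  | zero => simp [h0]
  | succ n => simp only [hurdlePMF]; ring

lemma hasSum_max_sub_mul_hurdlePMF_one (d : ℕ) (lam : ℝ) :
    HasSum (fun y : ℕ => max ((y : ℝ) - (d + 1)) 0 * hurdlePMF 1 lam y)
      (exp (-lam) * ((lam - d) * exp lam
        + ∑ k ∈ Finset.range d, (d - k : ℝ) * (lam ^ k / k !))) := by
  refine (hasSum_nat_add_iff' 1).mp ?_
  simp only [Finset.range_one, Finset.sum_singleton, hurdlePMF, sub_self, mul_zero, sub_zero]
  refine ((hasSum_max_sub_mul_pow_div_factorial d lam).mul_left (exp (-lam))).congr_fun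
    fun n => ?_
  push_cast
  rw [add_sub_add_right_eq_sub]
  ring

lemma tsum_max_sub_three_mul_hurdlePMF_one (lam : ℝ) :
    ∑' y : ℕ, max ((y : ℝ) - 3) 0 * hurdlePMF 1 lam y = lam - 2 + (lam + 2) * exp (-lam) := by
  have h := (hasSum_max_sub_mul_hurdlePMF_one 2 lam).tsum_eq
  norm_num [Finset.sum_range_succ] at h
  rw [h, exp_neg]
  field_simp
  ring

/-- The posterior mean of `f` when `w` is an unnormalised posterior density on `s`. -/
noncomputable def weightedMean (s : Set ℝ) (w f : ℝ → ℝ) : ℝ :=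
  (∫ x in s, f x * w x) / ∫ x in s, w x

lemma weightedMean_const_mul_left {k : ℝ} (hk : k ≠ 0) (s : Set ℝ) (w f : ℝ → ℝ) :
    weightedMean s (fun x => k * w x) f = weightedMean s w f := by
  simp only [weightedMean, mul_left_comm _ k, integral_const_mul]
  exact mul_div_mul_left _ _ hk

lemma integral_integral_mul {α β L : Type*} [RCLike L] [MeasurableSpace α] [MeasurableSpace β]
    (μ : Measure α) (ν : Measure β) (f : α → L) (g : β → L) :
    ∫ x, ∫ y, f x * g y ∂ν ∂μ = (∫ x, f x ∂μ) * ∫ y, g y ∂ν := by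
  simp_rw [integral_const_mul, integral_mul_const]

lemma condExpHurdle_eq_weightedMean_mul {h : ℕ → ℝ} (h0 : h 0 = 0) {y₁ : ℕ} {u v : ℝ → ℝ}
    (huv : ∀ p lam, hurdlePMF p lam y₁ = u p * v lam) (a b α β : ℝ) :
    condExpHurdle a b α β h y₁ =
      weightedMean (Ioo 0 1) (fun p => u p * betaDens a b p) (fun p => p) *
        weightedMean (Ioi 0) (fun lam => v lam * gammaDens α β lam)
          (fun lam => ∑' y, h y * hurdlePMF 1 lam y) := by
  have hnum : ∀ p lam, (∑' y, h y * hurdlePMF p lam y) * hurdlePMF p lam y₁ *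
      betaDens a b p * gammaDens α β lam = p * (u p * betaDens a b p) *
        ((∑' y, h y * hurdlePMF 1 lam y) * (v lam * gammaDens α β lam)) := fun p lam => by
    rw [tsum_mul_hurdlePMF h0, huv]; ring
  have hden : ∀ p lam, hurdlePMF p lam y₁ * betaDens a b p * gammaDens α β lam =
      u p * betaDens a b p * (v lam * gammaDens α β lam) := fun p lam => by
    rw [huv]; ring
  simp only [condExpHurdle, weightedMean, hnum, hden, integral_integral_mul]
  exact mul_div_mul_comm _ _ _ _

lemma betaDens_right_one {a : ℝ} (ha : 0 < a) (x : ℝ) : betaDens a 1 x = a * x ^ (a - 1) := by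
  rw [betaDens, sub_self, rpow_zero, Gamma_add_one ha.ne', Gamma_one]
  field_simp [(Gamma_pos_of_pos ha).ne']

lemma integral_Ioo_rpow {r : ℝ} (hr : -1 < r) : ∫ x in Ioo (0 : ℝ) 1, x ^ r = 1 / (r + 1) := by
  rw [← integral_Ioc_eq_integral_Ioo, ← intervalIntegral.integral_of_le zero_le_one,
    integral_rpow (Or.inl hr), one_rpow, zero_rpow (by linarith)]
  ring

lemma integral_pow_mul_betaDens_right_one {a : ℝ} (ha : 0 < a) (n : ℕ) :
    ∫ x in Ioo 0 1, x ^ n * betaDens a 1 x = a / (a + n) := by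
  calc ∫ x in Ioo 0 1, x ^ n * betaDens a 1 x
      = ∫ x in Ioo 0 1, a * x ^ (a - 1 + n) :=
        setIntegral_congr_fun measurableSet_Ioo fun x hx => by
          rw [betaDens_right_one ha, rpow_add_natCast hx.1.ne']; ring
    _ = a / (a + n) := by
        rw [integral_const_mul, integral_Ioo_rpow (by linarith [n.cast_nonneg (α := ℝ)])]
        ring_nf

lemma integrableOn_pow_mul_betaDens_right_one {a : ℝ} (ha : 0 < a) (n : ℕ) :
    IntegrableOn (fun x => x ^ n * betaDens a 1 x) (Ioo 0 1) :=
  Integrable.of_integral_ne_zero <| by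
    rw [integral_pow_mul_betaDens_right_one ha]; exact (by positivity : 0 < a / (a + n)).ne'

lemma weightedMean_one_sub_mul_betaDens_right_one {a : ℝ} (ha : 0 < a) :
    weightedMean (Ioo 0 1) (fun p => (1 - p) * betaDens a 1 p) (fun p => p) = a / (a + 2) := by
  have hm := integral_pow_mul_betaDens_right_one ha
  have hi := integrableOn_pow_mul_betaDens_right_one ha
  have hnum : ∫ p in Ioo 0 1, p * ((1 - p) * betaDens a 1 p) = a / (a + 1) - a / (a + 2) := by
    calc ∫ p in Ioo 0 1, p * ((1 - p) * betaDens a 1 p)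
        = ∫ p in Ioo 0 1, (p ^ 1 * betaDens a 1 p - p ^ 2 * betaDens a 1 p) := by
          congr 1; funext p; ring
      _ = a / (a + 1) - a / (a + 2) := by
          rw [integral_sub (hi 1) (hi 2), hm, hm]; push_cast; ring
  have hden : ∫ p in Ioo 0 1, (1 - p) * betaDens a 1 p = 1 - a / (a + 1) := by
    calc ∫ p in Ioo 0 1, (1 - p) * betaDens a 1 p
        = ∫ p in Ioo 0 1, (p ^ 0 * betaDens a 1 p - p ^ 1 * betaDens a 1 p) := by
          congr 1; funext p; ring
      _ = 1 - a / (a + 1) := by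
          rw [integral_sub (hi 0) (hi 1), hm, hm]; push_cast; rw [add_zero, div_self ha.ne']
  rw [weightedMean, hnum, hden]
  field_simp
  ring

lemma weightedMean_mul_betaDens_right_one {a : ℝ} (ha : 0 < a) :
    weightedMean (Ioo 0 1) (fun p => p * betaDens a 1 p) (fun p => p) = (a + 1) / (a + 2) := by
  have hm := integral_pow_mul_betaDens_right_one ha
  have hnum : ∫ p in Ioo 0 1, p * (p * betaDens a 1 p) = a / (a + 2) := by
    calc ∫ p in Ioo 0 1, p * (p * betaDens a 1 p) = ∫ p in Ioo 0 1, p ^ 2 * betaDens a 1 p := by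
          congr 1; funext p; ring
      _ = a / (a + 2) := by rw [hm]; push_cast; rfl
  have hden : ∫ p in Ioo 0 1, p * betaDens a 1 p = a / (a + 1) := by
    simpa using hm 1
  rw [weightedMean, hnum, hden]
  field_simp

lemma gammaDens_left_one (β x : ℝ) : gammaDens 1 β x = β * exp (-(β * x)) := by
  rw [gammaDens, rpow_one, sub_self, rpow_zero, Gamma_one]; ring

lemma exp_neg_mul_gammaDens {β : ℝ} (hβ : 0 < β) (α x : ℝ) :
    exp (-x) * gammaDens α β x = (β / (β + 1)) ^ α * gammaDens α (β + 1) x := by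
  have hβ1 : (β + 1) ^ α ≠ 0 := (rpow_pos_of_pos (by linarith) α).ne'
  rw [gammaDens, gammaDens, div_rpow hβ.le (by linarith),
    show -((β + 1) * x) = -x + -(β * x) by ring, exp_add]
  field_simp

lemma integral_pow_mul_exp_neg_mul_Ioi (n : ℕ) {c : ℝ} (hc : 0 < c) :
    ∫ x in Ioi 0, x ^ n * exp (-(c * x)) = n ! / c ^ (n + 1) := by
  have h := integral_rpow_mul_exp_neg_mul_Ioi (a := n + 1) (by positivity) hc
  rw [add_sub_cancel_right, Gamma_nat_eq_factorial, ← Nat.cast_succ, rpow_natCast,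
    one_div_pow] at h
  simp only [rpow_natCast, Nat.succ_eq_add_one] at h
  rw [h]
  ring

lemma integrableOn_pow_mul_exp_neg_mul_Ioi (n : ℕ) {c : ℝ} (hc : 0 < c) :
    IntegrableOn (fun x => x ^ n * exp (-(c * x))) (Ioi 0) :=
  Integrable.of_integral_ne_zero <| by
    rw [integral_pow_mul_exp_neg_mul_Ioi n hc]
    exact (by positivity : (0 : ℝ) < n ! / c ^ (n + 1)).ne'

lemma weightedMean_gammaDens_left_one {β : ℝ} (hβ : 0 < β) :
    weightedMean (Ioi 0) (gammaDens 1 β) (fun x => x - 2 + (x + 2) * exp (-x)) =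
      1 / β - 2 + β / (β + 1) ^ 2 + 2 * β / (β + 1) := by
  have hm := fun n => integral_pow_mul_exp_neg_mul_Ioi n hβ
  have hm' := fun n => integral_pow_mul_exp_neg_mul_Ioi n (by linarith : 0 < β + 1)
  have hi := fun n => integrableOn_pow_mul_exp_neg_mul_Ioi n hβ
  have hi' := fun n => integrableOn_pow_mul_exp_neg_mul_Ioi n (by linarith : 0 < β + 1)
  have hexp : ∀ x, exp (-x) * exp (-(β * x)) = exp (-((β + 1) * x)) := fun x => by
    rw [← exp_add]; ring_nf
  have hnum : ∫ x in Ioi 0, (x - 2 + (x + 2) * exp (-x)) * exp (-(β * x)) =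
      1 / β ^ 2 - 2 / β + (1 / (β + 1) ^ 2 + 2 / (β + 1)) := by
    calc ∫ x in Ioi 0, (x - 2 + (x + 2) * exp (-x)) * exp (-(β * x))
        = ∫ x in Ioi 0, (x ^ 1 * exp (-(β * x)) - 2 * (x ^ 0 * exp (-(β * x))) +
            (x ^ 1 * exp (-((β + 1) * x)) + 2 * (x ^ 0 * exp (-((β + 1) * x))))) := by
          congr 1; funext x; rw [← hexp]; ring
      _ = _ := by
          have hA : IntegrableOn (fun x => x ^ 1 * exp (-(β * x)) - 2 * (x ^ 0 * exp (-(β * x))))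
              (Ioi 0) := (hi 1).sub ((hi 0).const_mul 2)
          have hB : IntegrableOn (fun x => x ^ 1 * exp (-((β + 1) * x)) +
              2 * (x ^ 0 * exp (-((β + 1) * x)))) (Ioi 0) := (hi' 1).add ((hi' 0).const_mul 2)
          rw [integral_add hA hB, integral_sub (hi 1) ((hi 0).const_mul 2),
            integral_add (hi' 1) ((hi' 0).const_mul 2),
            integral_const_mul, integral_const_mul, hm, hm, hm', hm']
          norm_num
          ring
  have hden : ∫ x in Ioi 0, exp (-(β * x)) = 1 / β := by
    simpa using hm 0
  rw [show gammaDens 1 β = fun x => β * exp (-(β * x)) from funext (gammaDens_left_one β),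
    weightedMean_const_mul_left hβ.ne', weightedMean, hnum, hden]
  field_simp
  ring

/-- In the Beta–Gamma Poisson–hurdle model with `a = 1/2`, `b = 1`, `α = 1`,
`β = 1`, the general credibility order fails:
`E[(Y₂ − 3)⁺ ∣ Y₁ = 0] = 1/20 > 1/30 = E[(Y₂ − 3)⁺ ∣ Y₁ = 1]`. -/
theorem general_credibility_order_violation :
    condExpHurdle (1/2) 1 1 1 (fun y => max ((y : ℝ) - 3) 0) 0 = 1/20 ∧
    condExpHurdle (1/2) 1 1 1 (fun y => max ((y : ℝ) - 3) 0) 1 = 1/30 ∧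
    condExpHurdle (1/2) 1 1 1 (fun y => max ((y : ℝ) - 3) 0) 1 <
      condExpHurdle (1/2) 1 1 1 (fun y => max ((y : ℝ) - 3) 0) 0 := by
  have h0 : condExpHurdle (1/2) 1 1 1 (fun y => max ((y : ℝ) - 3) 0) 0 = 1/20 := by
    rw [condExpHurdle_eq_weightedMean_mul (u := fun p => 1 - p) (v := fun _ => 1) (by norm_num)
        (fun p lam => (mul_one _).symm),
      weightedMean_one_sub_mul_betaDens_right_one (by norm_num),
      weightedMean_const_mul_left one_ne_zero]
    simp_rw [tsum_max_sub_three_mul_hurdlePMF_one]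
    rw [weightedMean_gammaDens_left_one one_pos]
    norm_num
  have h1 : condExpHurdle (1/2) 1 1 1 (fun y => max ((y : ℝ) - 3) 0) 1 = 1/30 := by
    rw [condExpHurdle_eq_weightedMean_mul (u := fun p => p) (v := fun lam => exp (-lam))
        (by norm_num) hurdlePMF_one,
      weightedMean_mul_betaDens_right_one (by norm_num)]
    simp_rw [exp_neg_mul_gammaDens one_pos, tsum_max_sub_three_mul_hurdlePMF_one]
    rw [weightedMean_const_mul_left (by norm_num), weightedMean_gammaDens_left_one (by norm_num)]
    norm_num
  exact ⟨h0, h1, by rw [h0, h1]; norm_num⟩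
end

section
/- Let μ₁, μ₂ ∈ ℝ, σ₂ > 0, and let Θ₂* ~ N(μ₂, σ₂²), W = exp(Θ₂*). Then σ(μ₁)(1 + E[W]) − σ(μ₁) (E[W e^{−W}] + E[e^{−W}]) / E[e^{−W}] = −σ(μ₁) Cov(W, e^{−W})/E[e^{−W}] > 0, where σ is the logistic function. Equivalently: σ(μ₁)(1 + e^{μ₂ + σ₂²/2}) > σ(μ₁) E[(1+W)e^{−W}]/E[e^{−W}]. -/
open Real MeasureTheory
open scoped ENNReal

/-- Density of the normal distribution `N(μ, σ²)`. -/
noncomputable def normalDens (μ σ x : ℝ) : ℝ :=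
  (σ * Real.sqrt (2 * Real.pi))⁻¹ * Real.exp (-((x - μ) ^ 2) / (2 * σ ^ 2))

lemma normalDens_pos {μ σ : ℝ} (hσ : 0 < σ) (x : ℝ) : 0 < normalDens μ σ x := by
  have h2π : 0 < 2 * Real.pi := by positivity
  unfold normalDens
  positivity

lemma continuous_normalDens (μ σ : ℝ) : Continuous (normalDens μ σ) := by
  unfold normalDens; fun_prop

lemma integrable_normalDens {μ σ : ℝ} (hσ : 0 < σ) : Integrable (normalDens μ σ) := by
  have hb : 0 < (2 * σ ^ 2)⁻¹ := by positivity
  have h2 : Integrable (fun x : ℝ => Real.exp (-(2 * σ ^ 2)⁻¹ * (x - μ) ^ 2)) :=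
    (integrable_exp_neg_mul_sq hb).comp_sub_right μ
  have hexp : normalDens μ σ = fun x =>
      (σ * Real.sqrt (2 * Real.pi))⁻¹ * Real.exp (-(2 * σ ^ 2)⁻¹ * (x - μ) ^ 2) := by
    funext x
    unfold normalDens
    rw [show -((x - μ) ^ 2) / (2 * σ ^ 2) = -(2 * σ ^ 2)⁻¹ * (x - μ) ^ 2 from by ring]
  rw [hexp]
  exact h2.const_mul _

lemma integral_normalDens {μ σ : ℝ} (hσ : 0 < σ) : ∫ x, normalDens μ σ x = 1 := by
  unfold normalDens
  rw [MeasureTheory.integral_const_mul]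
  have h1 : ∫ x : ℝ, Real.exp (-((x - μ) ^ 2) / (2 * σ ^ 2))
      = ∫ x : ℝ, Real.exp (-(2 * σ ^ 2)⁻¹ * x ^ 2) := by
    rw [← integral_sub_right_eq_self (fun x : ℝ => Real.exp (-(2 * σ ^ 2)⁻¹ * x ^ 2)) μ]
    have hexp : ∀ x : ℝ, -((x - μ) ^ 2) / (2 * σ ^ 2) = -(2 * σ ^ 2)⁻¹ * (x - μ) ^ 2 :=
      fun x => by ring
    simp only [hexp]
  rw [h1, integral_gaussian]
  have h2 : Real.pi / (2 * σ ^ 2)⁻¹ = σ ^ 2 * (2 * Real.pi) := by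
    field_simp
  rw [h2, Real.sqrt_mul (sq_nonneg σ), Real.sqrt_sq hσ.le]
  have h2π : 0 < 2 * Real.pi := by positivity
  have hne : σ * Real.sqrt (2 * Real.pi) ≠ 0 := by positivity
  exact inv_mul_cancel₀ hne

lemma exp_mul_normalDens {μ σ : ℝ} (hσ : 0 < σ) (x : ℝ) :
    Real.exp x * normalDens μ σ x
      = Real.exp (μ + σ ^ 2 / 2) * normalDens (μ + σ ^ 2) σ x := by
  have hσ2 : (2 : ℝ) * σ ^ 2 ≠ 0 := by positivity
  have hE : x + -((x - μ) ^ 2) / (2 * σ ^ 2)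
      = (μ + σ ^ 2 / 2) + -((x - (μ + σ ^ 2)) ^ 2) / (2 * σ ^ 2) := by
    field_simp
    ring
  unfold normalDens
  rw [mul_left_comm, ← Real.exp_add, mul_left_comm, ← Real.exp_add, hE]

lemma exp_mul_exp_neg_exp_le (x : ℝ) :
    Real.exp x * Real.exp (-Real.exp x) ≤ Real.exp (-1) := by
  have h : Real.exp x ≤ Real.exp (Real.exp x - 1) := by
    have := Real.add_one_le_exp (Real.exp x - 1); linarith
  calc Real.exp x * Real.exp (-Real.exp x)
      ≤ Real.exp (Real.exp x - 1) * Real.exp (-Real.exp x) :=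
        mul_le_mul_of_nonneg_right h (Real.exp_nonneg _)
    _ = Real.exp (-1) := by rw [← Real.exp_add]; ring_nf

lemma sign_term_neg {x y : ℝ} (hxy : x < y) :
    (Real.exp x - Real.exp y) * (Real.exp (-Real.exp x) - Real.exp (-Real.exp y)) < 0 := by
  have h1 : Real.exp x < Real.exp y := Real.exp_lt_exp.mpr hxy
  have h2 : Real.exp (-Real.exp y) < Real.exp (-Real.exp x) :=
    Real.exp_lt_exp.mpr (by linarith)
  nlinarith

lemma sign_term_nonpos (x y : ℝ) :
    (Real.exp x - Real.exp y) * (Real.exp (-Real.exp x) - Real.exp (-Real.exp y)) ≤ 0 := by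
  rcases lt_trichotomy x y with h | h | h
  · exact le_of_lt (sign_term_neg h)
  · subst h; simp
  · have := sign_term_neg h; nlinarith

lemma integrable_A {μ σ : ℝ} (hσ : 0 < σ) :
    Integrable (fun x => Real.exp x * normalDens μ σ x) := by
  refine ((integrable_normalDens (μ := μ + σ ^ 2) hσ).const_mul
    (Real.exp (μ + σ ^ 2 / 2))).congr (Filter.Eventually.of_forall fun x => ?_)
  exact (exp_mul_normalDens hσ x).symm

lemma integrable_C {μ σ : ℝ} (hσ : 0 < σ) :
    Integrable (fun x => Real.exp (-Real.exp x) * normalDens μ σ x) := by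
  refine (integrable_normalDens (μ := μ) hσ).mono
    (((Real.continuous_exp.comp Real.continuous_exp.neg).mul
      (continuous_normalDens μ σ)).aestronglyMeasurable)
    (Filter.Eventually.of_forall fun x => ?_)
  have hp := normalDens_pos (μ := μ) hσ x
  have h1 : Real.exp (-Real.exp x) ≤ 1 := by
    rw [← Real.exp_zero]
    exact Real.exp_le_exp.mpr (neg_nonpos.mpr (Real.exp_pos x).le)
  rw [Real.norm_eq_abs, Real.norm_eq_abs, abs_of_pos hp,
    abs_of_pos (mul_pos (Real.exp_pos _) hp)]
  nlinarith [Real.exp_pos (-Real.exp x)]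

lemma integrable_B {μ σ : ℝ} (hσ : 0 < σ) :
    Integrable (fun x => Real.exp x * Real.exp (-Real.exp x) * normalDens μ σ x) := by
  refine ((integrable_normalDens (μ := μ) hσ).const_mul (Real.exp (-1))).mono
    (((Real.continuous_exp.mul
      (Real.continuous_exp.comp Real.continuous_exp.neg)).mul
      (continuous_normalDens μ σ)).aestronglyMeasurable)
    (Filter.Eventually.of_forall fun x => ?_)
  have hp := normalDens_pos (μ := μ) hσ x
  have h1 := exp_mul_exp_neg_exp_le x
  have h2 : (0:ℝ) < Real.exp x * Real.exp (-Real.exp x) := by positivity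
  rw [Real.norm_eq_abs, Real.norm_eq_abs, abs_of_pos (mul_pos (Real.exp_pos _) hp),
    abs_of_pos (mul_pos h2 hp)]
  nlinarith [Real.exp_pos (-1:ℝ)]

lemma cov_lt {μ σ : ℝ} (hσ : 0 < σ) :
    (∫ x, Real.exp x * Real.exp (-Real.exp x) * normalDens μ σ x)
      < (∫ x, Real.exp x * normalDens μ σ x)
        * ∫ x, Real.exp (-Real.exp x) * normalDens μ σ x := by
  have hp_int : Integrable (normalDens μ σ) := integrable_normalDens hσ
  have hp_pos : ∀ x, 0 < normalDens μ σ x := normalDens_pos hσ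
  have iA := integrable_A (μ := μ) hσ
  have iB := integrable_B (μ := μ) hσ
  have iC := integrable_C (μ := μ) hσ
  have icomb : Integrable (fun z : ℝ × ℝ =>
      Real.exp z.1 * Real.exp (-Real.exp z.1) * normalDens μ σ z.1 * normalDens μ σ z.2
      + normalDens μ σ z.1 * (Real.exp z.2 * Real.exp (-Real.exp z.2) * normalDens μ σ z.2)
      - Real.exp z.1 * normalDens μ σ z.1 * (Real.exp (-Real.exp z.2) * normalDens μ σ z.2)
      - Real.exp (-Real.exp z.1) * normalDens μ σ z.1 * (Real.exp z.2 * normalDens μ σ z.2)) ((volume : Measure ℝ).prod volume) := by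
    have := (((iB.mul_prod hp_int).add (hp_int.mul_prod iB)).sub
      (iA.mul_prod iC)).sub (iC.mul_prod iA)
    exact this.congr (Filter.Eventually.of_forall fun z => rfl)
  have hexpand : ∀ z : ℝ × ℝ,
      (Real.exp z.1 - Real.exp z.2)
        * (Real.exp (-Real.exp z.1) - Real.exp (-Real.exp z.2))
        * (normalDens μ σ z.1 * normalDens μ σ z.2)
      = Real.exp z.1 * Real.exp (-Real.exp z.1) * normalDens μ σ z.1 * normalDens μ σ z.2
      + normalDens μ σ z.1 * (Real.exp z.2 * Real.exp (-Real.exp z.2) * normalDens μ σ z.2)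
      - Real.exp z.1 * normalDens μ σ z.1 * (Real.exp (-Real.exp z.2) * normalDens μ σ z.2)
      - Real.exp (-Real.exp z.1) * normalDens μ σ z.1 * (Real.exp z.2 * normalDens μ σ z.2) :=
    fun z => by ring
  have iInt : Integrable (fun z : ℝ × ℝ =>
      (Real.exp z.1 - Real.exp z.2)
        * (Real.exp (-Real.exp z.1) - Real.exp (-Real.exp z.2))
        * (normalDens μ σ z.1 * normalDens μ σ z.2)) ((volume : Measure ℝ).prod volume) :=
    icomb.congr (Filter.Eventually.of_forall fun z => (hexpand z).symm)
  have hval : ∫ z : ℝ × ℝ,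
      (Real.exp z.1 - Real.exp z.2)
        * (Real.exp (-Real.exp z.1) - Real.exp (-Real.exp z.2))
        * (normalDens μ σ z.1 * normalDens μ σ z.2) ∂((volume : Measure ℝ).prod volume)
      = 2 * ((∫ x, Real.exp x * Real.exp (-Real.exp x) * normalDens μ σ x)
          - (∫ x, Real.exp x * normalDens μ σ x)
            * ∫ x, Real.exp (-Real.exp x) * normalDens μ σ x) := by
    calc ∫ z : ℝ × ℝ,
        (Real.exp z.1 - Real.exp z.2)
          * (Real.exp (-Real.exp z.1) - Real.exp (-Real.exp z.2))
          * (normalDens μ σ z.1 * normalDens μ σ z.2) ∂((volume : Measure ℝ).prod volume)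
        = ∫ z : ℝ × ℝ,
          (Real.exp z.1 * Real.exp (-Real.exp z.1) * normalDens μ σ z.1 * normalDens μ σ z.2
          + normalDens μ σ z.1 * (Real.exp z.2 * Real.exp (-Real.exp z.2) * normalDens μ σ z.2)
          - Real.exp z.1 * normalDens μ σ z.1 * (Real.exp (-Real.exp z.2) * normalDens μ σ z.2)
          - Real.exp (-Real.exp z.1) * normalDens μ σ z.1
              * (Real.exp z.2 * normalDens μ σ z.2)) ∂((volume : Measure ℝ).prod volume) := by
          congr 1; funext z; exact hexpand z
      _ = 2 * ((∫ x, Real.exp x * Real.exp (-Real.exp x) * normalDens μ σ x)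
          - (∫ x, Real.exp x * normalDens μ σ x)
            * ∫ x, Real.exp (-Real.exp x) * normalDens μ σ x) := by
          have Iadd : Integrable (fun z : ℝ × ℝ =>
              Real.exp z.1 * Real.exp (-Real.exp z.1) * normalDens μ σ z.1 * normalDens μ σ z.2
              + normalDens μ σ z.1
                  * (Real.exp z.2 * Real.exp (-Real.exp z.2) * normalDens μ σ z.2)) ((volume : Measure ℝ).prod volume) :=
            ((iB.mul_prod hp_int).add (hp_int.mul_prod iB)).congr
              (Filter.Eventually.of_forall fun z => rfl)
          have Isub : Integrable (fun z : ℝ × ℝ =>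
              Real.exp z.1 * Real.exp (-Real.exp z.1) * normalDens μ σ z.1 * normalDens μ σ z.2
              + normalDens μ σ z.1
                  * (Real.exp z.2 * Real.exp (-Real.exp z.2) * normalDens μ σ z.2)
              - Real.exp z.1 * normalDens μ σ z.1
                  * (Real.exp (-Real.exp z.2) * normalDens μ σ z.2)) ((volume : Measure ℝ).prod volume) :=
            (Iadd.sub (iA.mul_prod iC)).congr (Filter.Eventually.of_forall fun z => rfl)
          rw [MeasureTheory.integral_sub Isub (iC.mul_prod iA),
            MeasureTheory.integral_sub Iadd (iA.mul_prod iC),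
            MeasureTheory.integral_add (iB.mul_prod hp_int) (hp_int.mul_prod iB),
            MeasureTheory.integral_prod_mul
              (fun x => Real.exp x * Real.exp (-Real.exp x) * normalDens μ σ x)
              (normalDens μ σ),
            MeasureTheory.integral_prod_mul (normalDens μ σ)
              (fun x => Real.exp x * Real.exp (-Real.exp x) * normalDens μ σ x),
            MeasureTheory.integral_prod_mul (fun x => Real.exp x * normalDens μ σ x)
              (fun x => Real.exp (-Real.exp x) * normalDens μ σ x),
            MeasureTheory.integral_prod_mul (fun x => Real.exp (-Real.exp x) * normalDens μ σ x)
              (fun x => Real.exp x * normalDens μ σ x),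
            integral_normalDens hσ]
          ring
  have hneg : ∫ z : ℝ × ℝ,
      (Real.exp z.1 - Real.exp z.2)
        * (Real.exp (-Real.exp z.1) - Real.exp (-Real.exp z.2))
        * (normalDens μ σ z.1 * normalDens μ σ z.2) ∂((volume : Measure ℝ).prod volume) < 0 := by
    have iNeg : Integrable (fun z : ℝ × ℝ =>
        -((Real.exp z.1 - Real.exp z.2)
          * (Real.exp (-Real.exp z.1) - Real.exp (-Real.exp z.2))
          * (normalDens μ σ z.1 * normalDens μ σ z.2))) ((volume : Measure ℝ).prod volume) :=
      iInt.neg.congr (Filter.Eventually.of_forall fun z => rfl)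
    have hpos : 0 < ∫ z : ℝ × ℝ,
        -((Real.exp z.1 - Real.exp z.2)
          * (Real.exp (-Real.exp z.1) - Real.exp (-Real.exp z.2))
          * (normalDens μ σ z.1 * normalDens μ σ z.2)) ∂((volume : Measure ℝ).prod volume) := by
      rw [integral_pos_iff_support_of_nonneg
        (fun z => by
          have h1 := sign_term_nonpos z.1 z.2
          have h2 := mul_pos (hp_pos z.1) (hp_pos z.2)
          simp only [Pi.zero_apply]
          nlinarith) iNeg]
      have hsub : (Set.Ioo (0:ℝ) 1) ×ˢ (Set.Ioo (1:ℝ) 2) ⊆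
          Function.support (fun z : ℝ × ℝ =>
            -((Real.exp z.1 - Real.exp z.2)
              * (Real.exp (-Real.exp z.1) - Real.exp (-Real.exp z.2))
              * (normalDens μ σ z.1 * normalDens μ σ z.2))) := by
        rintro ⟨x, y⟩ ⟨hx, hy⟩
        have hxy : x < y := lt_trans hx.2 hy.1
        have h1 := sign_term_neg hxy
        have h2 := mul_pos (hp_pos x) (hp_pos y)
        have : 0 < -((Real.exp x - Real.exp y)
            * (Real.exp (-Real.exp x) - Real.exp (-Real.exp y))
            * (normalDens μ σ x * normalDens μ σ y)) := by nlinarith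
        exact ne_of_gt this
      calc (0:ℝ≥0∞) < ((volume : Measure ℝ).prod volume) ((Set.Ioo (0:ℝ) 1) ×ˢ (Set.Ioo (1:ℝ) 2)) := by
            rw [Measure.prod_prod, Real.volume_Ioo, Real.volume_Ioo]
            norm_num
        _ ≤ _ := measure_mono hsub
    rw [MeasureTheory.integral_neg] at hpos
    linarith
  rw [hval] at hneg
  linarith

/-- Let `Θ₂* ~ N(μ₂, σ₂²)` and `W = exp Θ₂*`. Then
`σ(μ₁)(1 + E[W]) − σ(μ₁)(E[W e^{−W}] + E[e^{−W}])/E[e^{−W}]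
  = −σ(μ₁) Cov(W, e^{−W}) / E[e^{−W}] > 0`, and `E[W] = e^{μ₂ + σ₂²/2}`. -/
theorem hurdle_limit_gap_positive
    (μ₁ μ₂ σ₂ : ℝ) (hσ₂ : 0 < σ₂)
    (A B C : ℝ)
    (hA : A = ∫ x : ℝ, Real.exp x * normalDens μ₂ σ₂ x)
    (hB : B = ∫ x : ℝ, Real.exp x * Real.exp (-Real.exp x) * normalDens μ₂ σ₂ x)
    (hC : C = ∫ x : ℝ, Real.exp (-Real.exp x) * normalDens μ₂ σ₂ x) :
    logistic μ₁ * (1 + A) - logistic μ₁ * (B + C) / C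
        = -(logistic μ₁) * (B - A * C) / C ∧
    0 < logistic μ₁ * (1 + A) - logistic μ₁ * (B + C) / C ∧
    A = Real.exp (μ₂ + σ₂ ^ 2 / 2) := by
  have hp_pos : ∀ x, 0 < normalDens μ₂ σ₂ x := normalDens_pos hσ₂
  have hAval : A = Real.exp (μ₂ + σ₂ ^ 2 / 2) := by
    rw [hA]
    calc ∫ x, Real.exp x * normalDens μ₂ σ₂ x
        = ∫ x, Real.exp (μ₂ + σ₂ ^ 2 / 2) * normalDens (μ₂ + σ₂ ^ 2) σ₂ x := by
          congr 1; funext x; exact exp_mul_normalDens hσ₂ x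
      _ = Real.exp (μ₂ + σ₂ ^ 2 / 2) * ∫ x, normalDens (μ₂ + σ₂ ^ 2) σ₂ x :=
          MeasureTheory.integral_const_mul _ _
      _ = Real.exp (μ₂ + σ₂ ^ 2 / 2) := by rw [integral_normalDens hσ₂, mul_one]
  have hCpos : 0 < C := by
    rw [hC, integral_pos_iff_support_of_nonneg
      (fun x => le_of_lt (mul_pos (Real.exp_pos _) (hp_pos x))) (integrable_C hσ₂)]
    have hsub : Set.Ioo (0:ℝ) 1 ⊆
        Function.support (fun x => Real.exp (-Real.exp x) * normalDens μ₂ σ₂ x) :=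
      fun x _ => ne_of_gt (mul_pos (Real.exp_pos _) (hp_pos x))
    calc (0:ℝ≥0∞) < volume (Set.Ioo (0:ℝ) 1) := by rw [Real.volume_Ioo]; norm_num
      _ ≤ _ := measure_mono hsub
  have key : B < A * C := by
    rw [hA, hB, hC]; exact cov_lt hσ₂
  have hCne : C ≠ 0 := ne_of_gt hCpos
  have heq : logistic μ₁ * (1 + A) - logistic μ₁ * (B + C) / C
      = -(logistic μ₁) * (B - A * C) / C := by
    field_simp
    ring
  refine ⟨heq, ?_, hAval⟩
  rw [heq]
  have hL : 0 < logistic μ₁ := by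
    unfold logistic
    positivity
  have h1 : 0 < -(logistic μ₁) * (B - A * C) := by nlinarith
  positivity
end

section
/- Let (X_t)_{t=1}^{n} be random variables that are conditionally independent given a real latent variable Θ with distribution G, with conditional densities f_j(x | θ) each TP₂ in (x, θ). Then the joint density of (X₁, …, X_n), given by x ↦ ∫ ∏_j f_j(x_j | θ) dG(θ), is MTP₂. -/
open MeasureTheory

private lemma key_ineq (P Q S T : ℝ) (hS : 0 ≤ S) (hT : 0 ≤ T) (hQ : 0 ≤ Q)
    (h1 : S ≤ P) (h2 : T ≤ P) (hPQ : P * Q = S * T) : S + T ≤ P + Q := by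
  rcases eq_or_lt_of_le (hS.trans h1) with hP | hP
  · have hS0 : S = 0 := by linarith
    have hT0 : T = 0 := by linarith
    simp [hS0, hT0]; linarith
  · nlinarith [mul_nonneg (sub_nonneg.2 h1) (sub_nonneg.2 h2)]

/-- Mixture preservation of total positivity (Denuit et al., 2006): if
`X₁, …, X_n` are conditionally independent given a real latent variable `Θ`
with distribution `G`, with conditional densities `f j (· ∣ θ)` each TP₂ in
`(x, θ)`, then the joint density `x ↦ ∫ ∏ j, f j (x j) θ ∂G` is MTP₂. -/
theorem mixture_of_TP2_is_MTP2
    (n : ℕ) (G : Measure ℝ) [IsProbabilityMeasure G]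
    (f : Fin n → ℝ → ℝ → ℝ)
    (hf_nonneg : ∀ j x θ, 0 ≤ f j x θ)
    (hf_TP2 : ∀ j, ∀ x x' θ θ' : ℝ, x ≤ x' → θ ≤ θ' →
      f j x θ * f j x' θ' ≥ f j x' θ * f j x θ')
    (hint : ∀ x : Fin n → ℝ, Integrable (fun θ => ∏ j, f j (x j) θ) G)
    (g : (Fin n → ℝ) → ℝ)
    (hg : ∀ x : Fin n → ℝ, g x = ∫ θ, (∏ j, f j (x j) θ) ∂G) :
    ∀ x y : Fin n → ℝ,
      g (fun i => min (x i) (y i)) * g (fun i => max (x i) (y i)) ≥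
        g x * g y := by
  intro x y
  set m : Fin n → ℝ := fun i => min (x i) (y i) with hm
  set M : Fin n → ℝ := fun i => max (x i) (y i) with hM
  set a : ℝ → ℝ := fun θ => ∏ j, f j (m j) θ with ha
  set b : ℝ → ℝ := fun θ => ∏ j, f j (M j) θ with hb
  set c : ℝ → ℝ := fun θ => ∏ j, f j (x j) θ with hc
  set d : ℝ → ℝ := fun θ => ∏ j, f j (y j) θ with hd
  have hia : Integrable a G := hint m
  have hib : Integrable b G := hint M
  have hic : Integrable c G := hint x
  have hid : Integrable d G := hint y
  have hna : ∀ θ, 0 ≤ a θ := fun θ => Finset.prod_nonneg fun j _ => hf_nonneg j _ θ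
  have hnb : ∀ θ, 0 ≤ b θ := fun θ => Finset.prod_nonneg fun j _ => hf_nonneg j _ θ
  have hnc : ∀ θ, 0 ≤ c θ := fun θ => Finset.prod_nonneg fun j _ => hf_nonneg j _ θ
  have hnd : ∀ θ, 0 ≤ d θ := fun θ => Finset.prod_nonneg fun j _ => hf_nonneg j _ θ
  -- pointwise product identity : a θ * b θ = c θ * d θ
  have habcd : ∀ θ, a θ * b θ = c θ * d θ := by
    intro θ
    simp only [ha, hb, hc, hd]
    rw [← Finset.prod_mul_distrib, ← Finset.prod_mul_distrib]
    refine Finset.prod_congr rfl fun j _ => ?_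
    rcases le_total (x j) (y j) with h | h
    · simp [hm, hM, min_eq_left h, max_eq_right h]
    · simp only [hm, hM, min_eq_right h, max_eq_left h]
      ring
  -- pointwise dominance for θ ≤ θ'
  have hPS : ∀ θ θ', θ ≤ θ' → c θ * d θ' ≤ a θ * b θ' := by
    intro θ θ' hθ
    simp only [ha, hb, hc, hd]
    rw [← Finset.prod_mul_distrib, ← Finset.prod_mul_distrib]
    refine Finset.prod_le_prod (fun j _ => mul_nonneg (hf_nonneg j _ θ) (hf_nonneg j _ θ')) ?_
    intro j _
    rcases le_total (x j) (y j) with h | h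
    · simp [hm, hM, min_eq_left h, max_eq_right h]
    · simp only [hm, hM, min_eq_right h, max_eq_left h]
      exact hf_TP2 j (y j) (x j) θ θ' h hθ
  have hPT : ∀ θ θ', θ ≤ θ' → d θ * c θ' ≤ a θ * b θ' := by
    intro θ θ' hθ
    simp only [ha, hb, hc, hd]
    rw [← Finset.prod_mul_distrib, ← Finset.prod_mul_distrib]
    refine Finset.prod_le_prod (fun j _ => mul_nonneg (hf_nonneg j _ θ) (hf_nonneg j _ θ')) ?_
    intro j _
    rcases le_total (x j) (y j) with h | h
    · simp only [hm, hM, min_eq_left h, max_eq_right h]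
      exact hf_TP2 j (x j) (y j) θ θ' h hθ
    · simp [hm, hM, min_eq_right h, max_eq_left h]
  -- symmetric pointwise inequality for ordered pairs
  have hsym : ∀ θ θ', θ ≤ θ' →
      c θ * d θ' + c θ' * d θ ≤ a θ * b θ' + a θ' * b θ := by
    intro θ θ' hθ
    have hPQ : (a θ * b θ') * (a θ' * b θ) = (c θ * d θ') * (c θ' * d θ) := by
      have h1 := habcd θ
      have h2 := habcd θ'
      calc (a θ * b θ') * (a θ' * b θ) = (a θ * b θ) * (a θ' * b θ') := by ring
        _ = (c θ * d θ) * (c θ' * d θ') := by rw [h1, h2]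
        _ = (c θ * d θ') * (c θ' * d θ) := by ring
    have := key_ineq (a θ * b θ') (a θ' * b θ) (c θ * d θ') (c θ' * d θ)
      (mul_nonneg (hnc θ) (hnd θ')) (mul_nonneg (hnc θ') (hnd θ))
      (mul_nonneg (hna θ') (hnb θ)) (hPS θ θ' hθ)
      (by have := hPT θ θ' hθ; linarith [hPT θ θ' hθ, mul_comm (d θ) (c θ')]) hPQ
    linarith [mul_comm (d θ) (c θ')]
  -- pointwise inequality for all pairs
  have hpt : ∀ θ θ', c θ * d θ' + d θ * c θ' ≤ a θ * b θ' + b θ * a θ' := by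
    intro θ θ'
    rcases le_total θ θ' with h | h
    · have := hsym θ θ' h
      nlinarith [this, mul_comm (c θ') (d θ), mul_comm (a θ') (b θ)]
    · have := hsym θ' θ h
      nlinarith [this, mul_comm (c θ') (d θ), mul_comm (a θ') (b θ)]
  -- integrate inner variable
  have hinner : ∀ θ, c θ * ∫ θ', d θ' ∂G + d θ * ∫ θ', c θ' ∂G ≤
      a θ * ∫ θ', b θ' ∂G + b θ * ∫ θ', a θ' ∂G := by
    intro θ
    have hL : Integrable (fun θ' => c θ * d θ' + d θ * c θ') G :=
      (hid.const_mul _).add (hic.const_mul _)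
    have hR : Integrable (fun θ' => a θ * b θ' + b θ * a θ') G :=
      (hib.const_mul _).add (hia.const_mul _)
    have := integral_mono hL hR (fun θ' => hpt θ θ')
    rwa [integral_add (hid.const_mul _) (hic.const_mul _),
         integral_add (hib.const_mul _) (hia.const_mul _),
         integral_const_mul, integral_const_mul, integral_const_mul, integral_const_mul] at this
  -- integrate outer variable
  have hIL : Integrable (fun θ => c θ * ∫ θ', d θ' ∂G + d θ * ∫ θ', c θ' ∂G) G :=
    (hic.mul_const _).add (hid.mul_const _)
  have hIR : Integrable (fun θ => a θ * ∫ θ', b θ' ∂G + b θ * ∫ θ', a θ' ∂G) G :=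
    (hia.mul_const _).add (hib.mul_const _)
  have hmain := integral_mono hIL hIR hinner
  rw [integral_add (hic.mul_const _) (hid.mul_const _),
      integral_add (hia.mul_const _) (hib.mul_const _),
      integral_mul_const, integral_mul_const, integral_mul_const, integral_mul_const] at hmain
  have e1 : g m = ∫ θ, a θ ∂G := hg m
  have e2 : g M = ∫ θ, b θ ∂G := hg M
  have e3 : g x = ∫ θ, c θ ∂G := hg x
  have e4 : g y = ∫ θ, d θ ∂G := hg y
  show g m * g M ≥ g x * g y
  rw [e1, e2, e3, e4]
  nlinarith [hmain, mul_comm (∫ θ, c θ ∂G) (∫ θ, d θ ∂G), mul_comm (∫ θ, a θ ∂G) (∫ θ, b θ ∂G)]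
end
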